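/- Let G be a finite simple chordal graph that is P_7-free, and let IR be an irredundant set of G. Then for every A ⊆ RN = V(G) \ IR, A belongs to D_RN(G) if and only if every x ∈ A has an irredundant private neighbor in some irredundant component entirely dominated by A; that is, for every x ∈ A there exists an irredundant component C of G with C ⊆ N(A) and Priv_IR(A,x) ∩ C ≠ ∅. -/

import Mathlib

variable {V : Type*}

/-- The closed neighborhood `N[x]` of a vertex. -/
def cnbr (G : SimpleGraph V) (x : V) : Set V := insert x (G.neighborSet x)

/-- `N[X] = ⋃ x ∈ X, N[x]`. -/
def cnbrSet (G : SimpleGraph V) (X : Set V) : Set V := ⋃ x ∈ X, cnbr G x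

/-- `N(X) = N[X] \ X`. -/
def onbrSet (G : SimpleGraph V) (X : Set V) : Set V := cnbrSet G X \ X

/-- `D` dominates `X` if `X ⊆ N[D]`. -/
def Dominates (G : SimpleGraph V) (D X : Set V) : Prop := X ⊆ cnbrSet G D

/-- `D` is a minimal dominating set of `G`. -/
def IsMinDomSet (G : SimpleGraph V) (D : Set V) : Prop :=
  Dominates G D Set.univ ∧ ∀ D' : Set V, D' ⊂ D → ¬ Dominates G D' Set.univ

/-- `Priv(D, x)`: private neighbors of `x` w.r.t. `D`. -/
def priv (G : SimpleGraph V) (D : Set V) (x : V) : Set V := {u | cnbr G u ∩ D = {x}}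

/-- `IR` is an irredundant set of `G`. -/
def IsIrredundantSet (G : SimpleGraph V) (IR : Set V) : Prop :=
  (∀ v : V, ∃ x ∈ IR, cnbr G x ⊆ cnbr G v) ∧
  (∀ x ∈ IR, ∀ v : V, ¬ cnbr G v ⊂ cnbr G x) ∧
  (∀ x ∈ IR, ∀ y ∈ IR, x ≠ y → cnbr G x ≠ cnbr G y)

/-- `Priv_IR(D, x) = Priv(D, x) ∩ IR`. -/
def privIR (G : SimpleGraph V) (IR D : Set V) (x : V) : Set V := priv G D x ∩ IR

/-- `A ∈ D_RN(G)`: `A` is the intersection of a minimal dominating set with `RN = V \ IR`. -/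
def memDRN (G : SimpleGraph V) (IR A : Set V) : Prop :=
  ∃ D : Set V, IsMinDomSet G D ∧ A = D ∩ IRᶜ

/-- `G` is `P_k`-free: it has no induced path on `k` vertices. -/
def PkFree (G : SimpleGraph V) (k : ℕ) : Prop :=
  ¬ ∃ f : Fin k → V, Function.Injective f ∧
      ∀ i j : Fin k, G.Adj (f i) (f j) ↔ (i.val + 1 = j.val ∨ j.val + 1 = i.val)

/-- `G` is chordal: no induced cycle on `n ≥ 4` vertices. -/
def Chordal (G : SimpleGraph V) : Prop :=
  ∀ n : ℕ, 4 ≤ n → ¬ ∃ f : ZMod n → V, Function.Injective f ∧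
      ∀ i j : ZMod n, G.Adj (f i) (f j) ↔ (i = j + 1 ∨ j = i + 1)

/-- `C` is a connected component of the subgraph of `G` induced by `S`. -/
def IsCompOf (G : SimpleGraph V) (S C : Set V) : Prop :=
  C ⊆ S ∧ C.Nonempty ∧ (G.induce C).Connected ∧
    ∀ x ∈ C, ∀ y ∈ S, G.Adj x y → y ∈ C

/-- `B(A)`: the elements of `A` having an irredundant private neighbor in some irredundant
component entirely contained in `N(A)`. -/
def Bset (G : SimpleGraph V) (IR A : Set V) : Set V :=
  {a ∈ A | ∃ C : Set V, IsCompOf G IR C ∧ C ⊆ onbrSet G A ∧ (privIR G IR A a ∩ C).Nonempty}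

/-- Domination inside the subgraph induced by `C`: every `u ∈ X` equals, or is adjacent
(within `C`) to, some `d ∈ D`.  For `D, X ⊆ C` this is domination in `G[C]`. -/
def domIn (G : SimpleGraph V) (C D X : Set V) : Prop :=
  ∀ u ∈ X, ∃ d ∈ D, u = d ∨ (G.Adj d u ∧ d ∈ C ∧ u ∈ C)

/-! The heart of the proof is that `G[IR]` is a disjoint union of cliques. If `u, w ∈ IR` were
non-adjacent neighbours of `v ∈ IR`, condition (ii) of irredundance, applied four times, would give
vertices `a', a, c, c'` such that along the path `a' a u v w c c'` every vertex misses the closed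
neighbourhood of the vertex two places before it. In a chordal graph such a path is induced (a chord
back to it would close a hole), so it is an induced `P₇`.

Hence the irredundant component of `y ∈ IR` is `IR ∩ N[y]`. For a minimal dominating set `D` and
`x ∈ D \ IR`, choose `y ∈ IR` with `N[y]` inside the closed neighbourhood of a private neighbour
of `x`: then `N[y] ∩ D = {x}`, so that component meets no other vertex of `D` and is dominated by
`D \ IR`. Conversely, `A` together with the vertices of `IR` outside `N[A]` dominates `G`; a minimal
dominating set between `A` and this set exists, and it keeps all of `A` because each `x ∈ A` is the
only neighbour in it of its irredundant private neighbour. -/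

variable {G : SimpleGraph V}

@[simp] lemma mem_cnbr {u v : V} : u ∈ cnbr G v ↔ u = v ∨ G.Adj v u := Iff.rfl

lemma self_mem_cnbr (v : V) : v ∈ cnbr G v := Set.mem_insert v _

lemma mem_cnbr_comm {u v : V} : u ∈ cnbr G v ↔ v ∈ cnbr G u := by
  simp [eq_comm, G.adj_comm]

lemma mem_cnbrSet {S : Set V} {z : V} : z ∈ cnbrSet G S ↔ ∃ s ∈ S, z ∈ cnbr G s := by
  simp [cnbrSet]

/-- `PkFree G k` says exactly that there is no `p : Fin k → V` with `IsInducedPath G p`. -/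
def IsInducedPath (G : SimpleGraph V) {k : ℕ} (p : Fin k → V) : Prop :=
  Function.Injective p ∧ ∀ i j : Fin k, G.Adj (p i) (p j) ↔ (i.val + 1 = j.val ∨ j.val + 1 = i.val)

lemma isInducedPath_const (u : V) : IsInducedPath G (fun _ : Fin 1 => u) :=
  ⟨fun i j _ => Subsingleton.elim i j, fun i j => by simp⟩

lemma IsInducedPath.tail {n : ℕ} {p : Fin (n + 1) → V} (hp : IsInducedPath G p) :
    IsInducedPath G (Fin.tail p) :=
  ⟨hp.1.comp (Fin.succ_injective _), fun i j => by simp [Fin.tail, hp.2]⟩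

lemma IsInducedPath.snoc {n : ℕ} {p : Fin (n + 1) → V} {q : V} (hp : IsInducedPath G p)
    (hq : G.Adj (p (Fin.last n)) q) (hfar : ∀ i : Fin n, q ∉ cnbr G (p i.castSucc)) :
    IsInducedPath G (Fin.snoc p q : Fin (n + 2) → V) := by
  have hne : ∀ i, p i ≠ q := by
    refine Fin.lastCases hq.ne fun i h => hfar i (by simp [h])
  have hadj : ∀ i, G.Adj (p i) q ↔ i = Fin.last n := by
    refine Fin.lastCases (by simpa using hq) fun i => ?_
    simpa [(Fin.castSucc_lt_last i).ne, G.adj_comm] using (hfar i) ∘ Or.inr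
  refine ⟨Fin.snoc_injective_of_injective hp.1 fun ⟨i, hi⟩ => hne i hi, fun i j => ?_⟩
  induction i using Fin.lastCases <;> induction j using Fin.lastCases <;>
    simp [hp.2, hadj, G.adj_comm q, Fin.ext_iff] <;> omega

lemma Chordal.false_of_hole (hG : Chordal G) {k : ℕ} {p : Fin (k + 3) → V}
    (hp : IsInducedPath G p) {q : V} (h0 : G.Adj (p 0) q) (hlast : G.Adj (p (Fin.last _)) q)
    (hmid : ∀ i, i ≠ 0 → i ≠ Fin.last _ → q ∉ cnbr G (p i)) : False := by
  have hadj : ∀ i, G.Adj (p i) q ↔ (i = 0 ∨ i = Fin.last _) := by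
    refine fun i => ⟨fun h => ?_, by rintro (rfl | rfl) <;> assumption⟩
    by_contra! hi
    exact hmid i hi.1 hi.2 (Or.inr h)
  have hne : ∀ i, p i ≠ q := fun i h => by
    by_cases hi : i = 0 ∨ i = Fin.last _
    · exact G.loopless.irrefl q (h ▸ (hadj i).2 hi)
    · push Not at hi
      exact hmid i hi.1 hi.2 (h ▸ self_mem_cnbr _)
  -- `ZMod (k + 4)` is definitionally `Fin (k + 4)`, so `Fin.snoc p q` is the cycle.
  refine hG (k + 4) (by omega) ⟨(Fin.snoc p q : Fin (k + 4) → V),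
    Fin.snoc_injective_of_injective hp.1 fun ⟨i, hi⟩ => hne i hi, fun (i j : Fin (k + 4)) => ?_⟩
  change _ ↔ i = j + 1 ∨ j = i + 1
  have hend : ∀ j : Fin (k + 3),
      (j = 0 ∨ j = Fin.last _) ↔ (Fin.last _ = j.castSucc + 1 ∨ j.castSucc = Fin.last _ + 1) := by
    intro j
    rw [Fin.coeSucc_eq_succ, Fin.last_add_one, ← Fin.succ_last (k + 2), Fin.succ_inj,
      Fin.castSucc_eq_zero_iff]
    tauto
  induction i using Fin.lastCases <;> induction j using Fin.lastCases
  · simp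
  · rw [Fin.snoc_last, Fin.snoc_castSucc, G.adj_comm, hadj, hend]
  · rw [Fin.snoc_last, Fin.snoc_castSucc, hadj, hend, or_comm]
  · simp only [Fin.snoc_castSucc, hp.2, Fin.coeSucc_eq_succ, Fin.ext_iff, Fin.val_succ,
      Fin.val_castSucc]
    omega

/-- Induction on the length of the path, dropping its first vertex: the new case is `q` adjacent
to `p 0`, which closes a hole. -/
lemma Chordal.not_mem_cnbr_of_isInducedPath (hG : Chordal G) :
    ∀ {n : ℕ} {p : Fin (n + 2) → V}, IsInducedPath G p → ∀ {q : V}, G.Adj (p (Fin.last _)) q →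
      q ∉ cnbr G (p (Fin.last n).castSucc) → ∀ i : Fin (n + 1), q ∉ cnbr G (p i.castSucc)
  | 0, _, _, _, _, hfar, i => by rwa [Subsingleton.elim (α := Fin 1) i (Fin.last 0)]
  | n + 1, p, hp, q, hq, hfar, i => by
    have htail := hG.not_mem_cnbr_of_isInducedPath hp.tail (q := q) hq
      (by rwa [Fin.tail, Fin.succ_castSucc])
    induction i using Fin.cases with
    | zero =>
      rintro (h | h)
      · rw [h] at hq
        simpa using (hp.2 _ _).1 hq
      · refine hG.false_of_hole hp h hq fun i hi0 hilast => ?_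
        induction i using Fin.cases with
        | zero => exact absurd rfl hi0
        | succ j =>
          induction j using Fin.lastCases with
          | last => exact absurd (Fin.succ_last _) hilast
          | cast j => exact htail j
    | succ i => rw [← Fin.succ_castSucc]; exact htail i

lemma Chordal.isInducedPath_snoc (hG : Chordal G) {n : ℕ} {p : Fin (n + 2) → V}
    (hp : IsInducedPath G p) {q : V} (hq : G.Adj (p (Fin.last _)) q)
    (hfar : q ∉ cnbr G (p (Fin.last n).castSucc)) :
    IsInducedPath G (Fin.snoc p q : Fin (n + 3) → V) :=
  hp.snoc hq (hG.not_mem_cnbr_of_isInducedPath hp hq hfar)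

lemma IsIrredundantSet.exists_adj_not_mem_cnbr {IR : Set V} (hIR : IsIrredundantSet G IR)
    {x y q : V} (hy : y ∈ IR) (hxy : x ∈ cnbr G y) (hqy : q ∈ cnbr G y) (hqx : q ∉ cnbr G x) :
    ∃ z, G.Adj x z ∧ z ∉ cnbr G y := by
  by_contra! h
  refine hIR.2.1 y hy x ⟨fun z hz => ?_, fun hyx => hqx (hyx hqy)⟩
  rcases hz with rfl | hz
  exacts [hxy, h z hz]

lemma IsIrredundantSet.adj_of_adj_of_adj {IR : Set V} (hIR : IsIrredundantSet G IR)
    (hG : Chordal G) (hP7 : PkFree G 7) {u v w : V} (hu : u ∈ IR) (hv : v ∈ IR) (hw : w ∈ IR)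
    (hvu : G.Adj v u) (hvw : G.Adj v w) (huw : u ≠ w) : G.Adj u w := by
  by_contra hnadj
  have hwu : w ∉ cnbr G u := by simp [huw.symm, hnadj]
  obtain ⟨a, hua, hav⟩ := hIR.exists_adj_not_mem_cnbr hv (Or.inr hvu) (Or.inr hvw) hwu
  obtain ⟨c, hwc, hcv⟩ :=
    hIR.exists_adj_not_mem_cnbr hv (Or.inr hvw) (Or.inr hvu) (mt mem_cnbr_comm.1 hwu)
  obtain ⟨a', haa', ha'u⟩ :=
    hIR.exists_adj_not_mem_cnbr hu (Or.inr hua) (Or.inr hvu.symm) (mt mem_cnbr_comm.1 hav)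
  obtain ⟨c', hcc', hc'w⟩ :=
    hIR.exists_adj_not_mem_cnbr hw (Or.inr hwc) (Or.inr hvw.symm) (mt mem_cnbr_comm.1 hcv)
  have h2 := (isInducedPath_const (G := G) a').snoc (q := a) haa'.symm (fun i => i.elim0)
  have h3 := hG.isInducedPath_snoc h2 (q := u) (by simpa only [Fin.snoc_last] using hua.symm)
    (by simpa only [Fin.snoc_castSucc, Fin.snoc_last, mem_cnbr_comm] using ha'u)
  have h4 := hG.isInducedPath_snoc h3 (q := v) (by simpa only [Fin.snoc_last] using hvu.symm)
    (by simpa only [Fin.snoc_castSucc, Fin.snoc_last, mem_cnbr_comm] using hav)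
  have h5 := hG.isInducedPath_snoc h4 (q := w) (by simpa only [Fin.snoc_last] using hvw)
    (by simpa only [Fin.snoc_castSucc, Fin.snoc_last] using hwu)
  have h6 := hG.isInducedPath_snoc h5 (q := c) (by simpa only [Fin.snoc_last] using hwc)
    (by simpa only [Fin.snoc_castSucc, Fin.snoc_last, mem_cnbr_comm] using hcv)
  have h7 := hG.isInducedPath_snoc h6 (q := c') (by simpa only [Fin.snoc_last] using hcc')
    (by simpa only [Fin.snoc_castSucc, Fin.snoc_last, mem_cnbr_comm] using hc'w)
  exact hP7 ⟨_, h7⟩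

/-- `G[S]` has no induced `P₃`, i.e. its components are cliques. -/
def InducesClusterGraph (G : SimpleGraph V) (S : Set V) : Prop :=
  ∀ ⦃u v w⦄, u ∈ S → v ∈ S → w ∈ S → G.Adj v u → G.Adj v w → u ≠ w → G.Adj u w

lemma IsIrredundantSet.inducesClusterGraph {IR : Set V} (hIR : IsIrredundantSet G IR)
    (hG : Chordal G) (hP7 : PkFree G 7) : InducesClusterGraph G IR :=
  fun _ _ _ hu hv hw => hIR.adj_of_adj_of_adj hG hP7 hu hv hw

lemma IsCompOf.mem_of_mem_cnbr {S C : Set V} (hC : IsCompOf G S C) {y z : V} (hy : y ∈ C)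
    (hz : z ∈ S) (hzy : z ∈ cnbr G y) : z ∈ C := by
  rcases hzy with rfl | hyz
  exacts [hy, hC.2.2.2 y hy z hz hyz]

lemma InducesClusterGraph.isCompOf_inter_cnbr {S : Set V} (hS : InducesClusterGraph G S) {y : V}
    (hy : y ∈ S) : IsCompOf G S (S ∩ cnbr G y) := by
  refine ⟨Set.inter_subset_left, ⟨y, hy, self_mem_cnbr y⟩, ?_, ?_⟩
  · refine (SimpleGraph.connected_iff_exists_forall_reachable _).2
      ⟨⟨y, hy, self_mem_cnbr y⟩, fun ⟨z, hzS, hz⟩ => ?_⟩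
    rcases hz with rfl | hyz
    exacts [.refl _, SimpleGraph.Adj.reachable hyz]
  · rintro z ⟨hzS, rfl | hyz⟩ x hxS hzx
    · exact ⟨hxS, Or.inr hzx⟩
    · refine ⟨hxS, ?_⟩
      by_cases hxy : y = x
      · exact Or.inl hxy.symm
      · exact Or.inr (hS hy hzS hxS hyz.symm hzx hxy)

lemma cnbr_inter_eq_singleton {D : Set V} (hD : Dominates G D Set.univ) {x y : V}
    (h : cnbr G y ∩ D ⊆ {x}) : cnbr G y ∩ D = {x} := by
  obtain ⟨s, hsD, hys⟩ := mem_cnbrSet.1 (hD (Set.mem_univ y))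
  have hs : s ∈ cnbr G y ∩ D := ⟨mem_cnbr_comm.1 hys, hsD⟩
  exact Set.Subset.antisymm h (Set.singleton_subset_iff.2 (h hs ▸ hs))

lemma IsMinDomSet.exists_mem_irredundant_priv {D IR : Set V} (hD : IsMinDomSet G D)
    (hIR : IsIrredundantSet G IR) {x : V} (hx : x ∈ D) : ∃ y ∈ IR, cnbr G y ∩ D = {x} := by
  have hsub : D \ {x} ⊂ D := Set.sdiff_singleton_ssubset.2 hx
  obtain ⟨u, -, hu⟩ := Set.not_subset.1 (hD.2 _ hsub)
  obtain ⟨y, hyIR, hyu⟩ := hIR.1 u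
  refine ⟨y, hyIR, cnbr_inter_eq_singleton hD.1 fun s ⟨hsy, hsD⟩ => ?_⟩
  by_contra hsx
  exact hu (mem_cnbrSet.2 ⟨s, ⟨hsD, hsx⟩, mem_cnbr_comm.1 (hyu hsy)⟩)

lemma IsMinDomSet.exists_isCompOf_privIR {D IR : Set V} (hD : IsMinDomSet G D)
    (hIR : IsIrredundantSet G IR) (hcl : InducesClusterGraph G IR) {x : V} (hxD : x ∈ D)
    (hxIR : x ∉ IR) :
    ∃ C, IsCompOf G IR C ∧ C ⊆ onbrSet G (D ∩ IRᶜ) ∧ (privIR G IR (D ∩ IRᶜ) x ∩ C).Nonempty := by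
  obtain ⟨y, hyIR, hy⟩ := hD.exists_mem_irredundant_priv hIR hxD
  have hC := hcl.isCompOf_inter_cnbr hyIR
  have hyA : cnbr G y ∩ (D ∩ IRᶜ) = {x} := by
    rw [← Set.inter_assoc, hy, Set.singleton_inter_of_mem (show x ∈ IRᶜ from hxIR)]
  refine ⟨IR ∩ cnbr G y, hC, fun z hz => ⟨?_, fun hzA => hzA.2 hz.1⟩,
    y, ⟨hyA, hyIR⟩, hyIR, self_mem_cnbr y⟩
  obtain ⟨s, hsD, hzs⟩ := mem_cnbrSet.1 (hD.1 (Set.mem_univ z))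
  refine mem_cnbrSet.2 ⟨s, ⟨hsD, fun hsIR => hxIR ?_⟩, hzs⟩
  have hsC := hC.mem_of_mem_cnbr hz hsIR (mem_cnbr_comm.1 hzs)
  have hsx : s ∈ cnbr G y ∩ D := ⟨hsC.2, hsD⟩
  rw [hy] at hsx
  exact hsx ▸ hsIR

lemma exists_isMinDomSet_between [Finite V] {A Y : Set V} (hdom : Dominates G (A ∪ Y) Set.univ)
    (hpriv : ∀ a ∈ A, ∃ y, cnbr G y ∩ (A ∪ Y) = {a}) :
    ∃ D, IsMinDomSet G D ∧ A ⊆ D ∧ D ⊆ A ∪ Y := by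
  obtain ⟨D, ⟨hAD, hDY, hDdom⟩, hmin⟩ :=
    (Set.toFinite {D : Set V | A ⊆ D ∧ D ⊆ A ∪ Y ∧ Dominates G D Set.univ}).exists_minimal
      ⟨A ∪ Y, Set.subset_union_left, subset_rfl, hdom⟩
  refine ⟨D, ⟨hDdom, fun D' hD' hD'dom => ?_⟩, hAD, hDY⟩
  by_cases hAD' : A ⊆ D'
  · exact hD'.2 (hmin ⟨hAD', hD'.1.trans hDY, hD'dom⟩ hD'.1)
  · obtain ⟨a, ha, haD'⟩ := Set.not_subset.1 hAD'
    obtain ⟨y, hy⟩ := hpriv a ha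
    obtain ⟨s, hsD', hys⟩ := mem_cnbrSet.1 (hD'dom (Set.mem_univ y))
    have hs : s ∈ cnbr G y ∩ (A ∪ Y) := ⟨mem_cnbr_comm.1 hys, hDY (hD'.1 hsD')⟩
    rw [hy] at hs
    exact haD' (hs ▸ hsD')

lemma IsIrredundantSet.dominates_union_diff_cnbrSet {IR : Set V} (hIR : IsIrredundantSet G IR)
    (A : Set V) : Dominates G (A ∪ (IR \ cnbrSet G A)) Set.univ := by
  intro w _
  by_cases hw : w ∈ cnbrSet G A
  · exact Set.biUnion_subset_biUnion_left Set.subset_union_left hw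
  obtain ⟨g, hgIR, hgw⟩ := hIR.1 w
  refine mem_cnbrSet.2 ⟨g, Or.inr ⟨hgIR, fun hg => hw ?_⟩, mem_cnbr_comm.1 (hgw (self_mem_cnbr g))⟩
  obtain ⟨a, ha, hga⟩ := mem_cnbrSet.1 hg
  exact mem_cnbrSet.2 ⟨a, ha, mem_cnbr_comm.1 (hgw (mem_cnbr_comm.1 hga))⟩

lemma memDRN_of_forall_exists_isCompOf [Finite V] {IR A : Set V} (hIR : IsIrredundantSet G IR)
    (hA : A ⊆ IRᶜ) (h : ∀ x ∈ A, ∃ C, IsCompOf G IR C ∧ C ⊆ onbrSet G A ∧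
      (privIR G IR A x ∩ C).Nonempty) : memDRN G IR A := by
  have hpriv : ∀ a ∈ A, ∃ y, cnbr G y ∩ (A ∪ (IR \ cnbrSet G A)) = {a} := by
    intro a ha
    obtain ⟨C, hC, hCA, y, ⟨hya, -⟩, hyC⟩ := h a ha
    refine ⟨y, ?_⟩
    rw [Set.inter_union_distrib_left, hya, Set.union_eq_left]
    rintro z ⟨hzy, hzIR, hzA⟩
    exact (hzA (hCA (hC.mem_of_mem_cnbr hyC hzIR hzy)).1).elim
  obtain ⟨D, hD, hAD, hDA⟩ :=
    exists_isMinDomSet_between (hIR.dominates_union_diff_cnbrSet A) hpriv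
  refine ⟨D, hD, Set.Subset.antisymm (Set.subset_inter hAD hA) fun z ⟨hzD, hzIR⟩ => ?_⟩
  exact (hDA hzD).resolve_right fun hz => hzIR hz.1

/-- In a `P₇`-free chordal graph, `A ∈ D_RN(G)` iff every `x ∈ A` has an
irredundant private neighbor in some irredundant component entirely contained in `N(A)`. -/
theorem stmt_11 [Fintype V] (G : SimpleGraph V) (hch : Chordal G) (hP7 : PkFree G 7)
    (IR : Set V) (hIR : IsIrredundantSet G IR)
    (A : Set V) (hA : A ⊆ IRᶜ) :
    memDRN G IR A ↔
      ∀ x ∈ A, ∃ C : Set V, IsCompOf G IR C ∧ C ⊆ onbrSet G A ∧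
        (privIR G IR A x ∩ C).Nonempty := by
  refine ⟨?_, memDRN_of_forall_exists_isCompOf hIR hA⟩
  rintro ⟨D, hD, rfl⟩ x ⟨hxD, hxIR⟩
  exact hD.exists_isCompOf_privIR hIR (hIR.inducesClusterGraph hch hP7) hxD hxIR
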